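/- For every k ≥ 10, any strong resolving set S of the generalized Petersen graph GP(4k,2) contains at least 2k of the vertices v_0, …, v_{4k−1}. -/

import Mathlib

/-!
For every `i`, the inner vertices `v_i` and `v_{i+2k+1}` are mutually maximally distant, and in a
connected graph the only vertices strongly resolving such a pair are the pair itself. So a strong
resolving set contains `v_i` or `v_{i+2k+1}` for each of the `4k` indices `i`, hence at least `2k`
inner vertices. For the mutual maximality, rotations reduce to `i = 0` and the reflection
`i ↦ 2k+1-i` swaps the two ends; `d(v₀, v_{2k+1}) ≥ k+2` follows from a 1-Lipschitz potential,
while each neighbour of `v₀` reaches `v_{2k+1}` in at most `k+2` steps along explicit walks.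
-/

/-- A vertex `w` strongly resolves vertices `u` and `v` in graph `G`:
`u` lies on a shortest `v`–`w` path or `v` lies on a shortest `u`–`w` path,
equivalently via distances. -/
def StronglyResolves {V : Type*} (G : SimpleGraph V) (w u v : V) : Prop :=
  G.dist w u = G.dist w v + G.dist v u ∨ G.dist w v = G.dist w u + G.dist u v

/-- `S` is a strong resolving set of `G`. -/
def IsStrongResolvingSet {V : Type*} (G : SimpleGraph V) (S : Set V) : Prop :=
  ∀ u v : V, u ≠ v → ∃ w ∈ S, StronglyResolves G w u v

/-- The strong metric dimension: minimum cardinality of a strong resolving set. -/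
noncomputable def sdim {V : Type*} (G : SimpleGraph V) : ℕ :=
  sInf {m : ℕ | ∃ S : Set V, IsStrongResolvingSet G S ∧ S.ncard = m}

/-- Mutually maximally distant vertices. -/
def MutuallyMaximallyDistant {V : Type*} (G : SimpleGraph V) (u v : V) : Prop :=
  u ≠ v ∧ (∀ w : V, G.Adj u w → G.dist w v ≤ G.dist u v) ∧
    (∀ w : V, G.Adj v w → G.dist u w ≤ G.dist u v)

/-- The generalized Petersen graph `GP n k`, with outer vertices `Sum.inl i` (the `uᵢ`)
and inner vertices `Sum.inr i` (the `vᵢ`), indices in `ZMod n`. -/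
def GP (n k : ℕ) : SimpleGraph (ZMod n ⊕ ZMod n) where
  Adj x y := match x, y with
    | Sum.inl i, Sum.inl j => i ≠ j ∧ (j = i + 1 ∨ i = j + 1)
    | Sum.inl i, Sum.inr j => i = j
    | Sum.inr i, Sum.inl j => i = j
    | Sum.inr i, Sum.inr j => i ≠ j ∧ (j = i + (k : ZMod n) ∨ i = j + (k : ZMod n))
  symm := ⟨by rintro (i|i) (j|j) h <;> simp_all <;> tauto⟩
  loopless := ⟨by rintro (i|i) h <;> simp_all⟩

namespace SimpleGraph

variable {V W : Type*} {G : SimpleGraph V} {G' : SimpleGraph W} {u v : V}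

theorem Hom.edist_map_le (f : G →g G') (u v : V) : G'.edist (f u) (f v) ≤ G.edist u v := by
  by_cases h : G.Reachable u v
  · obtain ⟨p, hp⟩ := h.exists_walk_length_eq_edist
    rw [← hp, ← Walk.length_map f p]
    exact edist_le _
  · rw [edist_eq_top_of_not_reachable h]
    exact le_top

theorem Iso.edist_map (e : G ≃g G') (u v : V) : G'.edist (e u) (e v) = G.edist u v := by
  refine le_antisymm (e.toHom.edist_map_le u v) ?_
  simpa using e.symm.toHom.edist_map_le (e u) (e v)

theorem Iso.dist_map (e : G ≃g G') (u v : V) : G'.dist (e u) (e v) = G.dist u v := by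
  simp only [dist, e.edist_map]

theorem dist_le_one_of_adj_or_eq (h : G.Adj u v ∨ u = v) : G.dist u v ≤ 1 := by
  rcases h with h | rfl
  · exact (dist_eq_one_iff_adj.mpr h).le
  · simp

theorem reachable_of_adj_or_eq (h : G.Adj u v ∨ u = v) : G.Reachable u v := by
  rcases h with h | rfl
  · exact h.reachable
  · rfl

theorem le_add_dist_of_forall_adj {f : V → ℕ} (hf : ∀ x y, G.Adj x y → f y ≤ f x + 1)
    (h : G.Reachable u v) : f v ≤ f u + G.dist u v := by
  obtain ⟨p, hp⟩ := h.exists_walk_length_eq_dist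
  rw [← hp]
  clear hp h
  induction p with
  | nil => simp
  | cons hadj _ ih =>
    have := hf _ _ hadj
    simp only [Walk.length_cons]
    omega

end SimpleGraph

open SimpleGraph

section MutuallyMaximallyDistant

variable {V W : Type*} {G : SimpleGraph V} {G' : SimpleGraph W} {u v w : V}

theorem MutuallyMaximallyDistant.symm (h : MutuallyMaximallyDistant G u v) :
    MutuallyMaximallyDistant G v u :=
  ⟨h.1.symm, fun x hx => by simpa only [dist_comm] using h.2.2 x hx,
    fun x hx => by simpa only [dist_comm] using h.2.1 x hx⟩

theorem MutuallyMaximallyDistant.map (e : G ≃g G') (h : MutuallyMaximallyDistant G u v) :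
    MutuallyMaximallyDistant G' (e u) (e v) := by
  refine ⟨e.injective.ne h.1, fun x hx => ?_, fun x hx => ?_⟩
  · rw [← e.apply_symm_apply x, e.dist_map, e.dist_map]
    exact h.2.1 _ (by simpa using e.symm.map_adj_iff.mpr hx)
  · rw [← e.apply_symm_apply x, e.dist_map, e.dist_map]
    exact h.2.2 _ (by simpa using e.symm.map_adj_iff.mpr hx)

theorem MutuallyMaximallyDistant.of_swap (e : G ≃g G) (hu : e u = v) (hv : e v = u)
    (hne : u ≠ v) (h : ∀ x, G.Adj u x → G.dist x v ≤ G.dist u v) :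
    MutuallyMaximallyDistant G u v := by
  refine ⟨hne, h, fun x hx => ?_⟩
  have hx' : G.Adj u (e x) := by simpa [hv] using e.map_adj_iff.mpr hx
  calc G.dist u x = G.dist (e x) v := by rw [← e.dist_map, hu, dist_comm]
    _ ≤ G.dist u v := h _ hx'

theorem MutuallyMaximallyDistant.dist_ne_dist_add (hG : G.Connected)
    (h : MutuallyMaximallyDistant G u v) (hwv : w ≠ v) :
    G.dist w u ≠ G.dist w v + G.dist v u := by
  intro hw
  obtain ⟨p, hp⟩ := hG.exists_walk_length_eq_dist v w
  cases p with
  | nil => exact hwv rfl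
  | @cons _ x _ hadj q =>
    -- `hw` puts `v` on a geodesic from `u` to `w`; its successor `x` is then farther from `u`
    have hq : G.dist x w ≤ q.length := dist_le q
    have hlen : q.length + 1 = G.dist v w := by simpa using hp
    have htri : G.dist u w ≤ G.dist u x + G.dist x w := hG.dist_triangle
    have hx := h.2.2 x hadj
    rw [dist_comm (u := w), dist_comm (u := w) (v := v), dist_comm (u := v) (v := u)] at hw
    omega

theorem MutuallyMaximallyDistant.eq_or_eq_of_stronglyResolves (hG : G.Connected)
    (h : MutuallyMaximallyDistant G u v) (hw : StronglyResolves G w u v) : w = u ∨ w = v := by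
  by_contra! hne
  rcases hw with hw | hw
  · exact h.dist_ne_dist_add hG hne.2 hw
  · exact h.symm.dist_ne_dist_add hG hne.1 hw

theorem IsStrongResolvingSet.mem_or_mem (hG : G.Connected) {S : Set V}
    (hS : IsStrongResolvingSet G S) (h : MutuallyMaximallyDistant G u v) : u ∈ S ∨ v ∈ S := by
  obtain ⟨w, hwS, hw⟩ := hS u v h.1
  rcases h.eq_or_eq_of_stronglyResolves hG hw with rfl | rfl
  · exact Or.inl hwS
  · exact Or.inr hwS

end MutuallyMaximallyDistant

theorem sub_eq_sub_add_iff {R : Type*} [CommRing R] (a i j d : R) :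
    a - j = a - i + d ↔ i = j + d := by
  constructor <;> intro h <;> linear_combination h

theorem Set.card_le_two_mul_ncard_of_mem_or_add_mem {A : Type*} [AddGroup A] [Finite A]
    {T : Set A} (c : A) (h : ∀ a, a ∈ T ∨ a + c ∈ T) : Nat.card A ≤ 2 * T.ncard := by
  have hcover : Set.univ ⊆ T ∪ (· - c) '' T := fun a _ =>
    (h a).imp id fun ha => ⟨a + c, ha, add_sub_cancel_right a c⟩
  calc Nat.card A = (Set.univ : Set A).ncard := Set.ncard_univ A |>.symm
    _ ≤ (T ∪ (· - c) '' T).ncard := Set.ncard_le_ncard hcover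
    _ ≤ T.ncard + ((· - c) '' T).ncard := Set.ncard_union_le _ _
    _ ≤ 2 * T.ncard := by have := Set.ncard_image_le (f := (· - c)) (s := T); omega

namespace ZMod

variable {n : ℕ}

theorem natAbs_valMinAbs_natCast_le [NeZero n] (m : ℕ) : (m : ZMod n).valMinAbs.natAbs ≤ m := by
  rw [valMinAbs_natAbs_eq_min, val_natCast]
  exact (min_le_left _ _).trans (Nat.mod_le m n)

theorem natAbs_valMinAbs_le_of_eq_add_or {i j d : ZMod n} (h : j = i + d ∨ i = j + d) :
    j.valMinAbs.natAbs ≤ i.valMinAbs.natAbs + d.valMinAbs.natAbs := by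
  have triangle (a b : ZMod n) :
      (a + b).valMinAbs.natAbs ≤ a.valMinAbs.natAbs + b.valMinAbs.natAbs :=
    (natAbs_valMinAbs_add_le a b).trans (Int.natAbs_add_le _ _)
  rcases h with rfl | rfl
  · exact triangle i d
  · simpa using triangle (j + d) (-d)

theorem even_natAbs_valMinAbs_iff (h : 2 ∣ n) (i : ZMod n) :
    Even i.valMinAbs.natAbs ↔ castHom h (ZMod 2) i = 0 := by
  rw [Int.natAbs_even, ← intCast_eq_zero_iff_even, ← map_intCast (castHom h (ZMod 2)),
    coe_valMinAbs]

end ZMod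

namespace GP

section

variable {n k : ℕ}

def rotate (a : ZMod n) : GP n k ≃g GP n k where
  toEquiv := Equiv.sumCongr (Equiv.addLeft a) (Equiv.addLeft a)
  map_rel_iff' := by
    rintro (i | i) (j | j) <;> simp [GP, add_assoc]

def reflect (a : ZMod n) : GP n k ≃g GP n k where
  toEquiv := Equiv.sumCongr (Equiv.subLeft a) (Equiv.subLeft a)
  map_rel_iff' := by
    rintro (i | i) (j | j) <;> simp [GP, sub_eq_sub_add_iff, or_comm]

@[simp] theorem rotate_inr (a i : ZMod n) : rotate (k := k) a (Sum.inr i) = Sum.inr (a + i) :=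
  rfl

@[simp] theorem reflect_inr (a i : ZMod n) : reflect (k := k) a (Sum.inr i) = Sum.inr (a - i) :=
  rfl

theorem adj_inl_inr (i : ZMod n) : (GP n k).Adj (Sum.inl i) (Sum.inr i) := rfl

theorem adj_or_eq_inl_add_one (i : ZMod n) :
    (GP n k).Adj (Sum.inl i) (Sum.inl (i + 1)) ∨
      (Sum.inl i : ZMod n ⊕ ZMod n) = Sum.inl (i + 1) := by
  by_cases h : i = i + 1
  · exact Or.inr (congrArg _ h)
  · exact Or.inl ⟨h, Or.inl rfl⟩

theorem adj_or_eq_inr_add (i : ZMod n) :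
    (GP n k).Adj (Sum.inr i) (Sum.inr (i + k)) ∨
      (Sum.inr i : ZMod n ⊕ ZMod n) = Sum.inr (i + k) := by
  by_cases h : i = i + k
  · exact Or.inr (congrArg _ h)
  · exact Or.inl ⟨h, Or.inl rfl⟩

theorem connected [NeZero n] : (GP n k).Connected := by
  have hinl : ∀ m : ℕ, (GP n k).Reachable (Sum.inl 0) (Sum.inl (m : ZMod n)) := by
    intro m
    induction m with
    | zero => simp
    | succ m ih =>
      simpa using ih.trans (reachable_of_adj_or_eq (adj_or_eq_inl_add_one (m : ZMod n)))
  have hall : ∀ x, (GP n k).Reachable (Sum.inl 0) x := by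
    rintro (i | i)
    · simpa using hinl i.val
    · simpa using (hinl i.val).trans (adj_inl_inr (i.val : ZMod n)).reachable
  exact ⟨fun x y => (hall x).symm.trans (hall y)⟩

variable [NeZero n]

theorem dist_inr_add_mul_le (i : ZMod n) (m : ℕ) :
    (GP n k).dist (Sum.inr i) (Sum.inr (i + (m * k : ZMod n))) ≤ m := by
  induction m with
  | zero => simp
  | succ m ih =>
    have hstep := dist_le_one_of_adj_or_eq (adj_or_eq_inr_add (k := k) (i + (m * k : ZMod n)))
    rw [show i + (m * k : ZMod n) + k = i + ((m + 1 : ℕ) * k : ZMod n) by push_cast; ring]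
      at hstep
    have htri := (connected (n := n) (k := k)).dist_triangle (u := Sum.inr i)
      (v := Sum.inr (i + (m * k : ZMod n))) (w := Sum.inr (i + ((m + 1 : ℕ) * k : ZMod n)))
    omega

theorem dist_inr_add_one_le (i : ZMod n) : (GP n k).dist (Sum.inr i) (Sum.inr (i + 1)) ≤ 3 := by
  have h1 := dist_le_one_of_adj_or_eq (Or.inl (adj_inl_inr (k := k) i).symm)
  have h2 := dist_le_one_of_adj_or_eq (adj_or_eq_inl_add_one (k := k) i)
  have h3 := dist_le_one_of_adj_or_eq (Or.inl (adj_inl_inr (k := k) (i + 1)))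
  have t1 := (connected (n := n) (k := k)).dist_triangle (u := Sum.inr i) (v := Sum.inl i)
    (w := Sum.inl (i + 1))
  have t2 := (connected (n := n) (k := k)).dist_triangle (u := Sum.inr i) (v := Sum.inl (i + 1))
    (w := Sum.inr (i + 1))
  omega

end

section

variable {n : ℕ}

/-- Writing `|i|` for the cyclic absolute value `i.valMinAbs.natAbs`, this is the distance
from `v₀` in `GP (4k) 2`: `u_i` is reached through `v_{i∓1}` when `|i|` is odd, and an inner
vertex `v_i` with `|i|` odd through the detour `v_{i∓1} u_{i∓1} u_i v_i`. -/
def potential (n : ℕ) : ZMod n ⊕ ZMod n → ℕ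
  | Sum.inl i => (i.valMinAbs.natAbs + 1) / 2 + 1
  | Sum.inr i => if Even i.valMinAbs.natAbs then i.valMinAbs.natAbs / 2
      else (i.valMinAbs.natAbs + 5) / 2

variable [NeZero n]

theorem potential_le_of_adj (hn : 2 ∣ n) {x y : ZMod n ⊕ ZMod n} (h : (GP n 2).Adj x y) :
    potential n y ≤ potential n x + 1 := by
  rcases x with i | i <;> rcases y with j | j
  · have hj := ZMod.natAbs_valMinAbs_le_of_eq_add_or h.2
    have h1 := ZMod.natAbs_valMinAbs_natCast_le (n := n) 1
    rw [Nat.cast_one] at h1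
    simp only [potential]
    omega
  · obtain rfl : i = j := h
    simp only [potential, Nat.even_iff]
    split_ifs <;> omega
  · obtain rfl : i = j := h
    simp only [potential, Nat.even_iff]
    split_ifs <;> omega
  · have hj := ZMod.natAbs_valMinAbs_le_of_eq_add_or h.2
    have h2 := ZMod.natAbs_valMinAbs_natCast_le (n := n) 2
    -- inner edges preserve the parity of `|i|` because `n` is even
    have hparity : Even j.valMinAbs.natAbs ↔ Even i.valMinAbs.natAbs := by
      have h0 : ZMod.castHom hn (ZMod 2) (2 : ℕ) = 0 := by rw [map_natCast]; rfl
      rw [ZMod.even_natAbs_valMinAbs_iff hn, ZMod.even_natAbs_valMinAbs_iff hn]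
      rcases h.2 with rfl | rfl <;> rw [map_add, h0, add_zero]
    simp only [potential]
    split_ifs with hi hj' <;> simp only [Nat.even_iff] at * <;> omega

theorem potential_le_dist (hn : 2 ∣ n) (y : ZMod n ⊕ ZMod n) :
    potential n y ≤ (GP n 2).dist (Sum.inr 0) y := by
  have h := le_add_dist_of_forall_adj (fun _ _ h => potential_le_of_adj hn h)
    ((connected (k := 2)).preconnected (Sum.inr 0) y)
  rwa [show potential n (Sum.inr 0) = 0 by simp [potential], zero_add] at h

end

section

variable {k : ℕ}

theorem natCast_four_mul_eq_zero : (4 * k : ZMod (4 * k)) = 0 := by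
  exact_mod_cast ZMod.natCast_self (4 * k)

variable [NeZero k]

theorem le_dist_inr_zero_inr :
    k + 2 ≤ (GP (4 * k) 2).dist (Sum.inr 0) (Sum.inr ((2 * k + 1 : ℕ) : ZMod (4 * k))) := by
  have hk : 1 ≤ k := NeZero.one_le
  have habs : ((2 * k + 1 : ℕ) : ZMod (4 * k)).valMinAbs.natAbs = 2 * k - 1 := by
    rw [ZMod.valMinAbs_natAbs_eq_min, ZMod.val_cast_of_lt (by omega)]
    omega
  have hodd : ¬Even (2 * k - 1) := by rw [Nat.not_even_iff_odd]; exact ⟨k - 1, by omega⟩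
  have h := potential_le_dist ⟨2 * k, by ring⟩ (Sum.inr ((2 * k + 1 : ℕ) : ZMod (4 * k)))
  simp only [potential, habs, hodd, if_false] at h
  omega

theorem dist_inr_neg_one_inr_le :
    (GP (4 * k) 2).dist (Sum.inr (-1)) (Sum.inr ((2 * k + 1 : ℕ) : ZMod (4 * k))) ≤ k - 1 := by
  have h := dist_inr_add_mul_le (n := 4 * k) (k := 2) ((2 * k + 1 : ℕ) : ZMod (4 * k)) (k - 1)
  rw [dist_comm]
  convert h using 3
  push_cast [Nat.cast_sub (NeZero.one_le : 1 ≤ k)]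
  linear_combination (-1 : ZMod (4 * k)) * natCast_four_mul_eq_zero

theorem dist_inl_zero_inr_le :
    (GP (4 * k) 2).dist (Sum.inl 0) (Sum.inr ((2 * k + 1 : ℕ) : ZMod (4 * k))) ≤ k + 1 := by
  have h1 : (GP (4 * k) 2).dist (Sum.inl 0) (Sum.inl (-1)) ≤ 1 := by
    rw [dist_comm]
    simpa using dist_le_one_of_adj_or_eq (adj_or_eq_inl_add_one (n := 4 * k) (k := 2) (-1))
  have h2 := dist_le_one_of_adj_or_eq (Or.inl (adj_inl_inr (n := 4 * k) (k := 2) (-1)))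
  have h3 := dist_inr_neg_one_inr_le (k := k)
  have t1 := (connected (n := 4 * k) (k := 2)).dist_triangle (u := Sum.inl 0)
    (v := Sum.inl (-1)) (w := Sum.inr ((2 * k + 1 : ℕ) : ZMod (4 * k)))
  have t2 := (connected (n := 4 * k) (k := 2)).dist_triangle (u := Sum.inl (-1))
    (v := Sum.inr (-1)) (w := Sum.inr ((2 * k + 1 : ℕ) : ZMod (4 * k)))
  have hk : 1 ≤ k := NeZero.one_le
  omega

theorem dist_inr_two_inr_le :
    (GP (4 * k) 2).dist (Sum.inr 2) (Sum.inr ((2 * k + 1 : ℕ) : ZMod (4 * k))) ≤ k + 2 := by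
  have h1 : (GP (4 * k) 2).dist (Sum.inr 2) (Sum.inr 3) ≤ 3 := by
    simpa [show (2 + 1 : ZMod (4 * k)) = 3 by norm_num] using
      dist_inr_add_one_le (k := 2) (2 : ZMod (4 * k))
  have h2 :
      (GP (4 * k) 2).dist (Sum.inr 3) (Sum.inr ((2 * k + 1 : ℕ) : ZMod (4 * k))) ≤ k - 1 := by
    have h := dist_inr_add_mul_le (n := 4 * k) (k := 2) 3 (k - 1)
    convert h using 3
    push_cast [Nat.cast_sub (NeZero.one_le : 1 ≤ k)]
    ring
  have t := (connected (n := 4 * k) (k := 2)).dist_triangle (u := Sum.inr 2)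
    (v := Sum.inr 3) (w := Sum.inr ((2 * k + 1 : ℕ) : ZMod (4 * k)))
  have hk : 1 ≤ k := NeZero.one_le
  omega

theorem dist_inr_neg_two_inr_le :
    (GP (4 * k) 2).dist (Sum.inr (-2)) (Sum.inr ((2 * k + 1 : ℕ) : ZMod (4 * k))) ≤ k + 2 := by
  have h1 : (GP (4 * k) 2).dist (Sum.inr (-2)) (Sum.inr (-1)) ≤ 3 := by
    simpa [show (-2 + 1 : ZMod (4 * k)) = -1 by ring] using
      dist_inr_add_one_le (k := 2) (-2 : ZMod (4 * k))
  have h2 := dist_inr_neg_one_inr_le (k := k)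
  have t := (connected (n := 4 * k) (k := 2)).dist_triangle (u := Sum.inr (-2))
    (v := Sum.inr (-1)) (w := Sum.inr ((2 * k + 1 : ℕ) : ZMod (4 * k)))
  have hk : 1 ≤ k := NeZero.one_le
  omega

theorem mutuallyMaximallyDistant_inr_zero :
    MutuallyMaximallyDistant (GP (4 * k) 2) (Sum.inr 0)
      (Sum.inr ((2 * k + 1 : ℕ) : ZMod (4 * k))) := by
  have hk : 1 ≤ k := NeZero.one_le
  refine .of_swap (reflect ((2 * k + 1 : ℕ) : ZMod (4 * k))) (by simp) (by simp) ?_ ?_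
  · intro h
    have h' := congrArg ZMod.val (Sum.inr_injective h)
    rw [ZMod.val_zero, ZMod.val_cast_of_lt (by omega)] at h'
    omega
  · have hd := le_dist_inr_zero_inr (k := k)
    rintro (j | j) hj
    · obtain rfl : 0 = j := hj
      linarith [dist_inl_zero_inr_le (k := k)]
    · rcases hj.2 with rfl | hj
      · simpa using (dist_inr_two_inr_le (k := k)).trans hd
      · obtain rfl : j = -2 := by simpa using eq_neg_of_add_eq_zero_left hj.symm
        exact (dist_inr_neg_two_inr_le (k := k)).trans hd

theorem mutuallyMaximallyDistant_inr (a : ZMod (4 * k)) :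
    MutuallyMaximallyDistant (GP (4 * k) 2) (Sum.inr a)
      (Sum.inr (a + ((2 * k + 1 : ℕ) : ZMod (4 * k)))) := by
  simpa using mutuallyMaximallyDistant_inr_zero.map (rotate a)

end

end GP

/-- For `k ≥ 10`, any strong resolving set of `GP (4k) 2` contains at least `2k`
of the inner vertices `v₀, …, v_{4k−1}`. -/
theorem stmt_11 (k : ℕ) (hk : 10 ≤ k) (S : Set (ZMod (4*k) ⊕ ZMod (4*k)))
    (hS : IsStrongResolvingSet (GP (4*k) 2) S) :
    2*k ≤ (S ∩ Set.range (Sum.inr : ZMod (4*k) → ZMod (4*k) ⊕ ZMod (4*k))).ncard := by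
  have : NeZero k := ⟨by omega⟩
  have hcover (i : ZMod (4 * k)) :
      i ∈ Sum.inr ⁻¹' S ∨ i + ((2 * k + 1 : ℕ) : ZMod (4 * k)) ∈ Sum.inr ⁻¹' S :=
    hS.mem_or_mem GP.connected (GP.mutuallyMaximallyDistant_inr i)
  have hcard := Set.card_le_two_mul_ncard_of_mem_or_add_mem _ hcover
  rw [Nat.card_zmod] at hcard
  rw [← Set.image_preimage_eq_inter_range, Set.ncard_image_of_injective _ Sum.inr_injective]
  omega
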